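/- Let G, H be m×n real matrices such that |G_{ij}| ≤ α|H_{ij}| for all i, j, and let K = diag(HᵀH). Then for any β ∈ (0,1], there exists a linear subspace W ⊆ ℝⁿ with dim(W) ≥ (1-β)n such that for all w ∈ W, wᵀGᵀGw ≤ (α²/β) · wᵀKw. -/

import Mathlib

/-!
Let `κ j = (Hᵀ H) j j` and `D = diagonal √κ`. Dividing the columns of `G` by `√κ j` gives `N` with
`G = N D`: a zero column of `H` forces a zero column of `G`, and `(√0)⁻¹ = 0` keeps `N` defined.
Column by column `‖N_j‖² ≤ α²`, so `trace (Nᵀ N) ≤ α² n` and at most `β n` eigenvalues of `Nᵀ N`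
exceed `α² / β`. On the common kernel `V` of the corresponding eigen-coordinates,
`vᵀ Nᵀ N v ≤ (α² / β) ‖v‖²`. Since `wᵀ Gᵀ G w = (D w)ᵀ Nᵀ N (D w)` and `wᵀ K w = ‖D w‖²`,
the preimage `W` of `V` under `D` works, and taking preimages never lowers dimension.
-/

open Matrix

theorem Submodule.finrank_add_le_finrank_comap_add {K E F : Type*} [DivisionRing K]
    [AddCommGroup E] [Module K E] [FiniteDimensional K E]
    [AddCommGroup F] [Module K F] [FiniteDimensional K F] (f : E →ₗ[K] F) (V : Submodule K F) :
    Module.finrank K V + Module.finrank K E ≤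
      Module.finrank K (V.comap f) + Module.finrank K F := by
  have hker : V.comap f = LinearMap.ker (V.mkQ ∘ₗ f) := by
    rw [LinearMap.ker_comp, Submodule.ker_mkQ]
  have hrange := Submodule.finrank_le (LinearMap.range (V.mkQ ∘ₗ f))
  have hrn := LinearMap.finrank_range_add_finrank_ker (V.mkQ ∘ₗ f)
  have hq := V.finrank_quotient_add_finrank
  rw [hker]
  omega

namespace Matrix

section Semiring

variable {m n R : Type*} [Fintype m] [CommSemiring R]

theorem transpose_mul_self_apply_self (A : Matrix m n R) (j : n) :
    (Aᵀ * A) j j = ∑ i, A i j ^ 2 := by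
  simp [mul_apply, sq]

variable [Fintype n]

theorem dotProduct_mulVec_transpose_mul_mul (A : Matrix m n R) (N : Matrix m m R) (w : n → R) :
    w ⬝ᵥ (Aᵀ * N * A) *ᵥ w = (A *ᵥ w) ⬝ᵥ N *ᵥ (A *ᵥ w) := by
  rw [← mulVec_mulVec, ← mulVec_mulVec, dotProduct_mulVec, vecMul_transpose]

variable [DecidableEq n]

theorem dotProduct_mulVec_self_of_transpose_mul_self_eq_one {A : Matrix n n R}
    (hA : Aᵀ * A = 1) (v : n → R) : (A *ᵥ v) ⬝ᵥ (A *ᵥ v) = v ⬝ᵥ v := by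
  nth_rewrite 2 [← one_mulVec (A *ᵥ v)]
  rw [← dotProduct_mulVec_transpose_mul_mul, mul_one, hA, one_mulVec]

theorem dotProduct_diagonal_mulVec_self (d y : n → R) :
    y ⬝ᵥ diagonal d *ᵥ y = ∑ i, d i * y i ^ 2 := by
  simp only [dotProduct, mulVec_diagonal]
  exact Finset.sum_congr rfl fun i _ => by ring

end Semiring

theorem transpose_mul_self_apply_self_nonneg {m n : Type*} [Fintype m] (A : Matrix m n ℝ)
    (j : n) : 0 ≤ (Aᵀ * A) j j := by
  rw [transpose_mul_self_apply_self]
  positivity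

variable {n : Type*} [Fintype n] [DecidableEq n] {M : Matrix n n ℝ}

theorem IsHermitian.dotProduct_mulVec_self_eq_sum_eigenvalues (hM : M.IsHermitian)
    (v : n → ℝ) :
    v ⬝ᵥ M *ᵥ v =
      ∑ i, hM.eigenvalues i * (star (hM.eigenvectorUnitary : Matrix n n ℝ) *ᵥ v) i ^ 2 := by
  set U : Matrix n n ℝ := ↑hM.eigenvectorUnitary
  have hM' : M = (star U)ᵀ * diagonal hM.eigenvalues * star U := by
    conv_lhs => rw [hM.spectral_theorem, Unitary.conjStarAlgAut_apply]
    rw [star_eq_conjTranspose, conjTranspose_eq_transpose_of_trivial, transpose_transpose]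
    rfl
  conv_lhs => rw [hM', dotProduct_mulVec_transpose_mul_mul, dotProduct_diagonal_mulVec_self]

theorem PosSemidef.exists_finrank_forall_dotProduct_mulVec_le (hM : M.PosSemidef) {t : ℝ}
    (ht : 0 < t) :
    ∃ V : Submodule ℝ (n → ℝ), (Fintype.card n : ℝ) ≤ Module.finrank ℝ V + M.trace / t ∧
      ∀ v ∈ V, v ⬝ᵥ M *ᵥ v ≤ t * (v ⬝ᵥ v) := by
  set U : Matrix n n ℝ := ↑hM.1.eigenvectorUnitary
  set μ := hM.1.eigenvalues
  set T := Finset.univ.filter fun i => t < μ i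
  set Φ : (n → ℝ) →ₗ[ℝ] (T → ℝ) := LinearMap.funLeft ℝ ℝ Subtype.val ∘ₗ (star U).mulVecLin
  refine ⟨LinearMap.ker Φ, ?_, fun v hv => ?_⟩
  · have hT : t * T.card ≤ M.trace := calc
      t * T.card = ∑ _i ∈ T, t := by simp [mul_comm]
      _ ≤ ∑ i ∈ T, μ i := Finset.sum_le_sum fun i hi => (Finset.mem_filter.mp hi).2.le
      _ ≤ ∑ i, μ i := Finset.sum_le_sum_of_subset_of_nonneg T.subset_univ
          fun i _ _ => hM.eigenvalues_nonneg i
      _ = M.trace := by simpa using hM.1.trace_eq_sum_eigenvalues.symm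
    have hrange : Module.finrank ℝ (LinearMap.range Φ) ≤ T.card := by
      simpa using Submodule.finrank_le (LinearMap.range Φ)
    have hrn := Φ.finrank_range_add_finrank_ker
    rw [Module.finrank_fintype_fun_eq_card] at hrn
    have : (T.card : ℝ) ≤ M.trace / t := by rw [le_div_iff₀ ht]; linarith
    have : (Fintype.card n : ℝ) ≤ Module.finrank ℝ (LinearMap.ker Φ) + T.card := by
      exact_mod_cast (by omega : Fintype.card n ≤ Module.finrank ℝ (LinearMap.ker Φ) + T.card)
    linarith
  · have hy : ∀ i ∈ T, (star U *ᵥ v) i = 0 := fun i hi => congrFun hv ⟨i, hi⟩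
    have hUU : (star U)ᵀ * star U = 1 := by
      rw [star_eq_conjTranspose, conjTranspose_eq_transpose_of_trivial, transpose_transpose]
      exact Unitary.mul_star_self_of_mem hM.1.eigenvectorUnitary.2
    rw [hM.1.dotProduct_mulVec_self_eq_sum_eigenvalues,
      ← dotProduct_mulVec_self_of_transpose_mul_self_eq_one hUU v, dotProduct, Finset.mul_sum]
    refine Finset.sum_le_sum fun i _ => ?_
    by_cases hi : i ∈ T
    · rw [hy i hi]; simp
    · have : μ i ≤ t := by simpa [T] using hi
      nlinarith [mul_self_nonneg ((star U *ᵥ v) i)]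

end Matrix

section ColumnDomination

variable {m n : Type*} [Fintype m] {G H : Matrix m n ℝ} {α : ℝ}

theorem transpose_mul_self_apply_self_le (hGH : ∀ i j, |G i j| ≤ α * |H i j|) (j : n) :
    (Gᵀ * G) j j ≤ α ^ 2 * (Hᵀ * H) j j := by
  rw [transpose_mul_self_apply_self, transpose_mul_self_apply_self, Finset.mul_sum]
  refine Finset.sum_le_sum fun i _ => ?_
  rw [← mul_pow]
  refine sq_le_sq.mpr ((hGH i j).trans ?_)
  rw [abs_mul]
  exact mul_le_mul_of_nonneg_right (le_abs_self α) (abs_nonneg _)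

variable [Fintype n] [DecidableEq n]

theorem mul_diagonal_inv_sqrt_mul_diagonal_sqrt (hGH : ∀ i j, |G i j| ≤ α * |H i j|) :
    G * diagonal (fun j => (√((Hᵀ * H) j j))⁻¹) * diagonal (fun j => √((Hᵀ * H) j j)) = G := by
  rw [Matrix.mul_assoc, diagonal_mul_diagonal]
  ext i j
  rw [mul_diagonal]
  by_cases hj : (Hᵀ * H) j j = 0
  · have hG : G i j ^ 2 ≤ 0 := calc
      G i j ^ 2 ≤ (Gᵀ * G) j j := by
        rw [transpose_mul_self_apply_self]
        exact Finset.single_le_sum (f := fun i => G i j ^ 2) (fun i _ => sq_nonneg _)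
          (Finset.mem_univ i)
      _ ≤ 0 := by simpa [hj] using transpose_mul_self_apply_self_le hGH j
    simp [pow_eq_zero_iff two_ne_zero |>.mp (le_antisymm hG (sq_nonneg _))]
  · have hpos := (transpose_mul_self_apply_self_nonneg H j).lt_of_ne' hj
    rw [inv_mul_cancel₀ (Real.sqrt_pos.mpr hpos).ne', mul_one]

theorem trace_transpose_mul_self_mul_diagonal_inv_sqrt_le (hGH : ∀ i j, |G i j| ≤ α * |H i j|) :
    ((G * diagonal fun j => (√((Hᵀ * H) j j))⁻¹)ᵀ *
      (G * diagonal fun j => (√((Hᵀ * H) j j))⁻¹)).trace ≤ α ^ 2 * Fintype.card n := by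
  set N := G * diagonal fun j => (√((Hᵀ * H) j j))⁻¹
  have hdiag : ∀ j, (Nᵀ * N) j j ≤ α ^ 2 := fun j => by
    have hκ := transpose_mul_self_apply_self_nonneg H j
    have : (Nᵀ * N) j j = (Gᵀ * G) j j / (Hᵀ * H) j j := by
      rw [transpose_mul_self_apply_self N, transpose_mul_self_apply_self G]
      simp only [N, mul_diagonal, mul_pow, inv_pow, Real.sq_sqrt hκ, ← Finset.sum_mul,
        div_eq_mul_inv]
    rw [this]
    exact div_le_of_le_mul₀ hκ (sq_nonneg α) (transpose_mul_self_apply_self_le hGH j)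
  calc (Nᵀ * N).trace ≤ ∑ _j : n, α ^ 2 := Finset.sum_le_sum fun j _ => hdiag j
    _ = α ^ 2 * Fintype.card n := by simp [mul_comm]

end ColumnDomination

theorem stmt0 (m n : ℕ) (G H : Matrix (Fin m) (Fin n) ℝ) (α β : ℝ)
    (hα : 0 < α)
    (hGH : ∀ i j, |G i j| ≤ α * |H i j|)
    (K : Matrix (Fin n) (Fin n) ℝ)
    (hK : K = Matrix.diagonal (fun j => (Hᵀ * H) j j))
    (hβ : β ∈ Set.Ioc (0:ℝ) 1) :
    ∃ W : Submodule ℝ (Fin n → ℝ),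
      (1 - β) * n ≤ (Module.finrank ℝ W : ℝ) ∧
      ∀ w ∈ W, w ⬝ᵥ ((Gᵀ * G).mulVec w) ≤ (α^2 / β) * (w ⬝ᵥ (K.mulVec w)) := by
  obtain ⟨hβ0, -⟩ := hβ
  set D := diagonal fun j => √((Hᵀ * H) j j)
  set N := G * diagonal fun j => (√((Hᵀ * H) j j))⁻¹
  have hG : Gᵀ * G = Dᵀ * (Nᵀ * N) * D := by
    have hND : N * D = G := mul_diagonal_inv_sqrt_mul_diagonal_sqrt hGH
    rw [← hND, transpose_mul]
    simp only [Matrix.mul_assoc]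
  have hK' : K = Dᵀ * 1 * D := by
    rw [hK, diagonal_transpose, Matrix.mul_one, diagonal_mul_diagonal]
    simp_rw [Real.mul_self_sqrt (transpose_mul_self_apply_self_nonneg H _)]
  have hN : (Nᵀ * N).PosSemidef :=
    conjTranspose_eq_transpose_of_trivial N ▸ posSemidef_conjTranspose_mul_self N
  obtain ⟨V, hVdim, hV⟩ :=
    hN.exists_finrank_forall_dotProduct_mulVec_le (div_pos (pow_pos hα 2) hβ0)
  refine ⟨V.comap (toLin' D), ?_, fun w hw => ?_⟩
  · have hVW : (Module.finrank ℝ V : ℝ) ≤ Module.finrank ℝ (V.comap (toLin' D)) := by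
      exact_mod_cast Nat.le_of_add_le_add_right (V.finrank_add_le_finrank_comap_add (toLin' D))
    have htrace : (Nᵀ * N).trace / (α ^ 2 / β) ≤ β * n := calc
      _ ≤ α ^ 2 * n / (α ^ 2 / β) := by
        gcongr
        simpa only [Fintype.card_fin] using trace_transpose_mul_self_mul_diagonal_inv_sqrt_le hGH
      _ = β * n := by field_simp
    rw [Fintype.card_fin] at hVdim
    linarith
  · rw [hG, hK', dotProduct_mulVec_transpose_mul_mul, dotProduct_mulVec_transpose_mul_mul,
      one_mulVec]
    exact hV _ hw
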